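/- arXiv:2410.12441 — 3 statements merged into one kernel-verified Lean document; each statement's English description precedes it below -/
import Mathlib

section
/- Let h(p) = max(p, αp) be the leaky ReLU with slope 0 < α < 1 and C = {(p,q) ∈ ℝ² : h(p) ≤ q}. Then the Euclidean projection of (p̄,q̄) onto C is: (p̄,q̄) if h(p̄) ≤ q̄; ((p̄+q̄)/2, (p̄+q̄)/2) if |q̄| ≤ p̄; ((p̄+αq̄)/(1+α²), α(p̄+αq̄)/(1+α²)) if q̄ ≤ α p̄ and p̄ ≤ -α q̄; and (0,0) otherwise. -/
open scoped Classical

/-! The epigraph of `p ↦ max p (α p)` is the cone `{p ≤ q} ∩ {α p ≤ q}`, so each of the four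
formulas is certified by the KKT conditions: `(p̄, q̄) - w` is a nonnegative combination of the
outer normals `(1, -1)` and `(α, -1)` of the constraints active at `w`. Such a combination makes
the variational inequality `⟪w - (p̄, q̄), c - w⟫ ≥ 0` hold on the whole cone. -/

def IsLeakyReluEpigraphProj (α : ℝ) (x w : ℝ × ℝ) : Prop :=
  max w.1 (α * w.1) ≤ w.2 ∧
    ∀ p q : ℝ, max p (α * p) ≤ q →
      (w.1 - x.1) ^ 2 + (w.2 - x.2) ^ 2 ≤ (p - x.1) ^ 2 + (q - x.2) ^ 2

lemma sq_dist_le_of_inner_nonneg {w₁ w₂ x₁ x₂ p q : ℝ}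
    (h : 0 ≤ (w₁ - x₁) * (p - w₁) + (w₂ - x₂) * (q - w₂)) :
    (w₁ - x₁) ^ 2 + (w₂ - x₂) ^ 2 ≤ (p - x₁) ^ 2 + (q - x₂) ^ 2 := by
  nlinarith [sq_nonneg (p - w₁), sq_nonneg (q - w₂)]

namespace IsLeakyReluEpigraphProj

variable {α : ℝ} {x w : ℝ × ℝ}

lemma of_kkt {μ ν : ℝ} (hw : max w.1 (α * w.1) ≤ w.2) (hμ : 0 ≤ μ) (hν : 0 ≤ ν)
    (hx₁ : x.1 = w.1 + μ + α * ν) (hx₂ : x.2 = w.2 - μ - ν)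
    (hμw : μ * (w.2 - w.1) = 0) (hνw : ν * (w.2 - α * w.1) = 0) :
    IsLeakyReluEpigraphProj α x w := by
  refine ⟨hw, fun p q hpq => sq_dist_le_of_inner_nonneg ?_⟩
  obtain ⟨hp, hαp⟩ := max_le_iff.1 hpq
  have hinner : (w.1 - x.1) * (p - w.1) + (w.2 - x.2) * (q - w.2)
      = μ * (q - p) + ν * (q - α * p) - μ * (w.2 - w.1) - ν * (w.2 - α * w.1) := by
    rw [hx₁, hx₂]; ring
  rw [hinner, hμw, hνw]
  have := mul_nonneg hμ (sub_nonneg.2 hp)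
  have := mul_nonneg hν (sub_nonneg.2 hαp)
  linarith

lemma self {a b : ℝ} (h : max a (α * a) ≤ b) : IsLeakyReluEpigraphProj α (a, b) (a, b) :=
  of_kkt (μ := 0) (ν := 0) h le_rfl le_rfl (by simp) (by simp) (zero_mul _) (zero_mul _)

lemma diag {a b : ℝ} (hα : α ≤ 1) (h : |b| ≤ a) :
    IsLeakyReluEpigraphProj α (a, b) ((a + b) / 2, (a + b) / 2) := by
  obtain ⟨hab, hba⟩ := abs_le.1 h
  have hs : 0 ≤ (a + b) / 2 := by linarith
  refine of_kkt (μ := (a - b) / 2) (ν := 0) ?_ (by linarith) le_rfl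
    (by simp only; ring) (by simp only; ring) (by ring) (zero_mul _)
  exact max_le le_rfl (by nlinarith)

lemma slope_line {a b : ℝ} (hα : α ≤ 1) (hb : b ≤ α * a) (ha : a ≤ -(α * b)) :
    IsLeakyReluEpigraphProj α (a, b)
      ((a + α * b) / (1 + α ^ 2), α * (a + α * b) / (1 + α ^ 2)) := by
  have hden : 0 < 1 + α ^ 2 := by positivity
  have ht : (a + α * b) / (1 + α ^ 2) ≤ 0 := div_nonpos_of_nonpos_of_nonneg (by linarith) hden.le
  refine of_kkt (μ := 0) (ν := (α * a - b) / (1 + α ^ 2)) ?_ le_rfl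
    (div_nonneg (by linarith) hden.le) (by simp only; field_simp; ring)
    (by simp only; field_simp; ring) (zero_mul _) (by simp only; ring)
  rw [mul_div_assoc]
  exact max_le (by nlinarith) le_rfl

lemma zero {a b : ℝ} (hα : α < 1) (hab : a + b ≤ 0) (hαab : 0 ≤ a + α * b) :
    IsLeakyReluEpigraphProj α (a, b) (0, 0) := by
  have hden : 0 < 1 - α := sub_pos.2 hα
  refine of_kkt (μ := (a + α * b) / (1 - α)) (ν := -(a + b) / (1 - α)) (by simp)
    (div_nonneg hαab hden.le) (div_nonneg (by linarith) hden.le)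
    (by simp only; field_simp; ring) (by simp only; field_simp; ring) (by simp) (by simp)

end IsLeakyReluEpigraphProj

lemma leaky_relu_vertex_region {α a b : ℝ} (hα : α < 1) (h₁ : ¬max a (α * a) ≤ b)
    (h₂ : ¬|b| ≤ a) (h₃ : ¬(b ≤ α * a ∧ a ≤ -(α * b))) : a + b ≤ 0 ∧ 0 ≤ a + α * b := by
  rw [max_le_iff, not_and_or, not_le, not_le] at h₁
  rw [abs_le, not_and_or, not_le, not_le] at h₂
  rw [not_and_or, not_le, not_le] at h₃
  constructor
  · by_contra! h
    have hab : a < b := h₂.resolve_left (by linarith)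
    have hb : b < α * a := h₁.resolve_left (by linarith)
    have ha : a < 0 := by nlinarith
    have hαb : -(α * b) < a := h₃.resolve_left (by linarith)
    -- `(-a) (α b + a) + b (α a - b) = -(a² + b²)` has two positive terms
    nlinarith [mul_pos (neg_pos.2 ha) (show 0 < α * b + a by linarith),
      mul_pos (show 0 < b by linarith) (sub_pos.2 hb)]
  · by_contra! h
    have hb : α * a < b := h₃.resolve_right (by linarith)
    have hba : b < a := h₁.resolve_right (by linarith)
    have ha : 0 < a := by nlinarith
    have hab : b < -a := h₂.resolve_right (by linarith)
    -- `(-b) (b - α a) + a (-a - α b) = -(a² + b²)` has two positive terms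
    nlinarith [mul_pos (show 0 < -b by linarith) (sub_pos.2 hb),
      mul_pos ha (show 0 < -a - α * b by linarith)]

theorem leaky_relu_epigraph_projection_general (α : ℝ) (hα1 : α < 1)
    (pbar qbar : ℝ) :
    let w : ℝ × ℝ :=
      if max pbar (α * pbar) ≤ qbar then (pbar, qbar)
      else if |qbar| ≤ pbar then ((pbar + qbar) / 2, (pbar + qbar) / 2)
      else if qbar ≤ α * pbar ∧ pbar ≤ -(α * qbar) then
        ((pbar + α * qbar) / (1 + α ^ 2), α * (pbar + α * qbar) / (1 + α ^ 2))
      else (0, 0)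
    max w.1 (α * w.1) ≤ w.2 ∧
      ∀ p q : ℝ, max p (α * p) ≤ q →
        (w.1 - pbar) ^ 2 + (w.2 - qbar) ^ 2 ≤ (p - pbar) ^ 2 + (q - qbar) ^ 2 := by
  intro w
  change IsLeakyReluEpigraphProj α (pbar, qbar) w
  dsimp only [w]
  split_ifs with h₁ h₂ h₃
  · exact .self h₁
  · exact .diag hα1.le h₂
  · exact .slope_line hα1.le h₃.1 h₃.2
  · obtain ⟨hab, hαab⟩ := leaky_relu_vertex_region hα1 h₁ h₂ h₃
    exact .zero hα1 hab hαab

/-- Epigraphical projection of the leaky ReLU `h p = max p (α p)`, `0 < α < 1`: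
the given piecewise formula is the Euclidean projection onto `C = {(p,q) : h p ≤ q}`. -/
theorem leaky_relu_epigraph_projection (α : ℝ) (hα0 : 0 < α) (hα1 : α < 1)
    (pbar qbar : ℝ) :
    let w : ℝ × ℝ :=
      if max pbar (α * pbar) ≤ qbar then (pbar, qbar)
      else if |qbar| ≤ pbar then ((pbar + qbar) / 2, (pbar + qbar) / 2)
      else if qbar ≤ α * pbar ∧ pbar ≤ -(α * qbar) then
        ((pbar + α * qbar) / (1 + α ^ 2), α * (pbar + α * qbar) / (1 + α ^ 2))
      else (0, 0)
    max w.1 (α * w.1) ≤ w.2 ∧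
      ∀ p q : ℝ, max p (α * p) ≤ q →
        (w.1 - pbar) ^ 2 + (w.2 - qbar) ^ 2 ≤ (p - pbar) ^ 2 + (q - qbar) ^ 2 :=
  leaky_relu_epigraph_projection_general α hα1 pbar qbar
end

section
/- Let f0(w) = Σᵢ (wᵢ − yᵢ + rᵢ) + Σᵢ yᵢ log(yᵢ/(wᵢ + rᵢ)) be the Kullback–Leibler data fidelity (defined for wᵢ + rᵢ > 0, with yᵢ > 0, rᵢ ≥ 0), and σ > 0. Then the proximal operator of its convex conjugate is given componentwise by prox_{f0*}^σ(w̄)ᵢ = (1/2)( w̄ᵢ + 1 + σrᵢ − sqrt((w̄ᵢ − 1 + σrᵢ)² + 4σyᵢ) ). -/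
open scoped Classical

private lemma kl_quad (y r σ wbar : ℝ) (hy : 0 < y) (hσ : 0 < σ) :
    let vstar : ℝ :=
      (1 / 2) * (wbar + 1 + σ * r - Real.sqrt ((wbar - 1 + σ * r) ^ 2 + 4 * σ * y))
    (wbar + σ * r - vstar) * (1 - vstar) = σ * y ∧ vstar < 1 := by
  intro vstar
  have h0 : (0:ℝ) ≤ (wbar - 1 + σ * r) ^ 2 + 4 * σ * y := by positivity
  have hs := Real.sq_sqrt h0
  have hnn := Real.sqrt_nonneg ((wbar - 1 + σ * r) ^ 2 + 4 * σ * y)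
  have hσy : 0 < σ * y := mul_pos hσ hy
  have hgt : (wbar - 1 + σ * r) < Real.sqrt ((wbar - 1 + σ * r) ^ 2 + 4 * σ * y) := by
    nlinarith [hs, hnn, hσy]
  have hv : vstar = (1 / 2) * (wbar + 1 + σ * r
      - Real.sqrt ((wbar - 1 + σ * r) ^ 2 + 4 * σ * y)) := rfl
  refine ⟨?_, ?_⟩ <;> rw [hv]
  · linear_combination hs / 4
  · nlinarith [hgt]

/-- The key scalar inequality for the conjugate: for `u < 1` and `w + r > 0`. -/
private lemma kl_conj_le (y r u w : ℝ) (hy : 0 < y) (hu : u < 1) (hw : 0 < w + r) :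
    u * w - ((w - y + r) + y * Real.log (y / (w + r))) ≤ -(r * u) - y * Real.log (1 - u) := by
  have hs : (0:ℝ) < 1 - u := by linarith
  have hpos : (0:ℝ) < (1 - u) * (w + r) / y := by positivity
  have h1 := Real.log_le_sub_one_of_pos hpos
  have h2 : Real.log ((1 - u) * (w + r) / y)
      = Real.log (1 - u) + Real.log (w + r) - Real.log y := by
    rw [Real.log_div (by positivity) hy.ne', Real.log_mul hs.ne' hw.ne']
  have h3 : Real.log (y / (w + r)) = Real.log y - Real.log (w + r) :=
    Real.log_div hy.ne' hw.ne'
  rw [h3]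
  rw [h2] at h1
  have h4 : y * (Real.log (1 - u) + Real.log (w + r) - Real.log y)
      ≤ y * ((1 - u) * (w + r) / y - 1) := mul_le_mul_of_nonneg_left h1 hy.le
  have h5 : y * ((1 - u) * (w + r) / y - 1) = (1 - u) * (w + r) - y := by
    field_simp
  rw [h5] at h4
  nlinarith [h4]

/-- The minimizing real inequality. -/
private lemma kl_main_ineq (y r σ wbar v vstar : ℝ) (hy : 0 < y) (hσ : 0 < σ)
    (hv : v < 1) (hvs : vstar < 1)
    (hquad : (wbar + σ * r - vstar) * (1 - vstar) = σ * y) :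
    1 / (2 * σ) * (vstar - wbar) ^ 2 + (-(r * vstar) - y * Real.log (1 - vstar))
      ≤ 1 / (2 * σ) * (v - wbar) ^ 2 + (-(r * v) - y * Real.log (1 - v)) := by
  have hd : (0:ℝ) < 1 - vstar := by linarith
  have hd2 : (0:ℝ) < 1 - v := by linarith
  have hpos : (0:ℝ) < (1 - v) / (1 - vstar) := by positivity
  have h1 := Real.log_le_sub_one_of_pos hpos
  rw [Real.log_div hd2.ne' hd.ne'] at h1
  -- multiplied form of the log concavity inequality
  have hlog : (1 - vstar) * Real.log (1 - v)
      ≤ (1 - vstar) * Real.log (1 - vstar) + (vstar - v) := by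
    have := mul_le_mul_of_nonneg_left h1 hd.le
    have he : (1 - vstar) * ((1 - v) / (1 - vstar) - 1) = vstar - v := by
      field_simp
      ring
    nlinarith [this, he]
  have key : (vstar - wbar) ^ 2 + 2 * σ * (-(r * vstar) - y * Real.log (1 - vstar))
      ≤ (v - wbar) ^ 2 + 2 * σ * (-(r * v) - y * Real.log (1 - v)) := by
    have hq2 : 2 * (v - vstar) * ((wbar + σ * r - vstar) * (1 - vstar))
        = 2 * (v - vstar) * (σ * y) := by rw [hquad]
    have hsq : (0:ℝ) ≤ (1 - vstar) * (v - vstar) ^ 2 := by positivity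
    nlinarith [mul_le_mul_of_nonneg_left hlog (by positivity : (0:ℝ) ≤ 2 * σ * y),
      hq2, hsq, hd, mul_pos hσ hy, sq_nonneg (v - vstar)]
  have h2σ : (0:ℝ) < 2 * σ := by linarith
  have e1 : ∀ a b : ℝ, 1 / (2 * σ) * a ^ 2 + b
      = 1 / (2 * σ) * (a ^ 2 + 2 * σ * b) := by
    intro a b; field_simp
  rw [e1, e1]
  exact mul_le_mul_of_nonneg_left key (by positivity)

/-- Proximal operator of the conjugate of the scalar Kullback–Leibler data fidelity
`f0 w = (w − y + r) + y log(y/(w+r))` (for `w + r > 0`, extended by `+∞` otherwise),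
with `y > 0`, `r ≥ 0`, `σ > 0`: it is given by the closed form
`(1/2)(w̄ + 1 + σr − sqrt((w̄ − 1 + σr)² + 4σy))`. -/
theorem prox_conjugate_KL (y r σ wbar : ℝ) (hy : 0 < y) (hr : 0 ≤ r) (hσ : 0 < σ) :
    let f0 : ℝ → EReal := fun w =>
      if 0 < w + r then (((w - y + r) + y * Real.log (y / (w + r)) : ℝ) : EReal) else ⊤
    let f0star : ℝ → EReal := fun v => ⨆ w : ℝ, ((v * w : ℝ) : EReal) - f0 w
    let G : ℝ → EReal := fun v => ((1 / (2 * σ) * (v - wbar) ^ 2 : ℝ) : EReal) + f0star v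
    let vstar : ℝ :=
      (1 / 2) * (wbar + 1 + σ * r - Real.sqrt ((wbar - 1 + σ * r) ^ 2 + 4 * σ * y))
    ∀ v : ℝ, G vstar ≤ G v := by
  intro f0 f0star G vstar v
  obtain ⟨hquad, hvslt⟩ := kl_quad y r σ wbar hy hσ
  -- value of the conjugate for u < 1
  have key : ∀ u : ℝ, u < 1 →
      f0star u = ((-(r * u) - y * Real.log (1 - u) : ℝ) : EReal) := by
    intro u hu
    have hs : (0:ℝ) < 1 - u := by linarith
    apply le_antisymm
    · apply iSup_le
      intro w
      by_cases hw : 0 < w + r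
      · simp only [f0, if_pos hw, ← EReal.coe_sub]
        exact_mod_cast kl_conj_le y r u w hy hu hw
      · simp only [f0, if_neg hw]
        simp
    · -- attained at w₀ = y/(1-u) - r
      set w₀ : ℝ := y / (1 - u) - r with hw₀
      have hw₀pos : 0 < w₀ + r := by
        have : w₀ + r = y / (1 - u) := by ring
        rw [this]; positivity
      have hval : ((u * w₀ : ℝ) : EReal) - f0 w₀
          = ((-(r * u) - y * Real.log (1 - u) : ℝ) : EReal) := by
        simp only [f0, if_pos hw₀pos, ← EReal.coe_sub]
        norm_cast
        have hlog : Real.log (y / (w₀ + r)) = Real.log (1 - u) := by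
          have h1 : w₀ + r = y / (1 - u) := by ring
          rw [h1]
          have h2 : y / (y / (1 - u)) = 1 - u := by
            field_simp
          rw [h2]
        rw [hlog]
        have h3 : u * w₀ - (w₀ - y + r) = -(r * u) := by
          rw [hw₀]; field_simp; ring
        linarith [h3]
      calc ((-(r * u) - y * Real.log (1 - u) : ℝ) : EReal)
          = ((u * w₀ : ℝ) : EReal) - f0 w₀ := hval.symm
        _ ≤ ⨆ w : ℝ, ((u * w : ℝ) : EReal) - f0 w :=
            le_iSup (fun w => ((u * w : ℝ) : EReal) - f0 w) w₀
  have Gval : ∀ u : ℝ, u < 1 →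
      G u = ((1 / (2 * σ) * (u - wbar) ^ 2 + (-(r * u) - y * Real.log (1 - u)) : ℝ) : EReal) := by
    intro u hu
    simp only [G, key u hu, ← EReal.coe_add]
  by_cases hv : v < 1
  · rw [Gval vstar hvslt, Gval v hv, EReal.coe_le_coe_iff]
    exact kl_main_ineq y r σ wbar v vstar hy hσ hv hvslt hquad
  · -- f0star v = ⊤, so G v = ⊤
    push_neg at hv
    have htop : f0star v = ⊤ := by
      rw [show f0star v = ⨆ w : ℝ, ((v * w : ℝ) : EReal) - f0 w from rfl, iSup_eq_top]
      intro b hb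
      obtain ⟨M, hbM, -⟩ := EReal.lt_iff_exists_real_btwn.mp hb
      set K : ℝ := (M + 1 - y + r + (v - 1) * r) / y with hK
      set w : ℝ := y * Real.exp K - r with hw
      refine ⟨w, ?_⟩
      have hwr : w + r = y * Real.exp K := by ring
      have hwrpos : 0 < w + r := by rw [hwr]; positivity
      have hlog : Real.log (y / (w + r)) = -K := by
        rw [hwr, Real.log_div hy.ne' (by positivity), Real.log_mul hy.ne'
          (Real.exp_pos K).ne', Real.log_exp]
        ring
      have hval : ((v * w : ℝ) : EReal) - f0 w
          = ((v * w - ((w - y + r) + y * Real.log (y / (w + r))) : ℝ) : EReal) := by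
        simp only [f0, if_pos hwrpos, ← EReal.coe_sub]
      rw [hval]
      refine lt_of_lt_of_le hbM ?_
      rw [EReal.coe_le_coe_iff]
      have hterm : v * w - ((w - y + r) + y * Real.log (y / (w + r)))
          = (v - 1) * w + y - r + y * K := by
        rw [hlog]; ring
      rw [hterm]
      have hK' : y * K = M + 1 - y + r + (v - 1) * r := by
        rw [hK]; field_simp
      have hvw : (v - 1) * w ≥ -((v - 1) * r) := by
        have h1 : (0:ℝ) ≤ v - 1 := by linarith
        have h2 : w ≥ -r := by nlinarith [Real.exp_pos K]
        nlinarith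
      linarith
    have hGv : G v = ⊤ := by
      simp only [G, htop]
      exact EReal.coe_add_top _
    rw [hGv]
    exact le_top
end

section
/- Let V0 : ℝⁿ → ℝᵈ and B := W1∘P : ℝᵈ → ℝᵏ be bounded linear operators, and K : ℝⁿ × ℝᵈ → ℝᵈ × ℝᵈ × ℝᵏ be K(x,z) = (V0 x, z, B z). Given c1, c2 > 0, define σ1 = c1/‖V0‖², σ2 = c2/‖B‖², τ1 = 1/(σ1‖V0‖²), τ2 = 1/(σ1 + σ2‖B‖²). With diagonal step matrices T = diag(τ1 I, τ2 I) and S = diag(σ1 I, σ1 I, σ2 I), one has ‖S^{1/2} K T^{1/2} u‖² ≤ ‖u‖² for all u = (x,z), i.e., ‖S^{1/2} K T^{1/2}‖ ≤ 1. -/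
namespace ContinuousLinearMap

variable {𝕜 E F : Type*} [NontriviallyNormedField 𝕜] [SeminormedAddCommGroup E]
  [SeminormedAddCommGroup F] [NormedSpace 𝕜 E] [NormedSpace 𝕜 F] (f : E →L[𝕜] F)

theorem norm_apply_sq_le (x : E) : ‖f x‖ ^ 2 ≤ ‖f‖ ^ 2 * ‖x‖ ^ 2 := by
  rw [← mul_pow]
  exact pow_le_pow_left₀ (norm_nonneg _) (f.le_opNorm x) 2

theorem mul_mul_norm_apply_sq_le {σ τ : ℝ} (hσ : 0 ≤ σ) (hτ : 0 ≤ τ)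
    (hστ : σ * ‖f‖ ^ 2 * τ ≤ 1) (x : E) : σ * τ * ‖f x‖ ^ 2 ≤ ‖x‖ ^ 2 :=
  calc σ * τ * ‖f x‖ ^ 2
      ≤ σ * τ * (‖f‖ ^ 2 * ‖x‖ ^ 2) := by gcongr; exact f.norm_apply_sq_le x
    _ = σ * ‖f‖ ^ 2 * τ * ‖x‖ ^ 2 := by ring
    _ ≤ ‖x‖ ^ 2 := mul_le_of_le_one_left (by positivity) hστ

theorem mul_norm_sq_add_mul_norm_apply_sq_le {σ₁ σ₂ τ : ℝ} (hσ₂ : 0 ≤ σ₂)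
    (hτ : 0 ≤ τ) (hστ : (σ₁ + σ₂ * ‖f‖ ^ 2) * τ ≤ 1) (x : E) :
    σ₁ * τ * ‖x‖ ^ 2 + σ₂ * τ * ‖f x‖ ^ 2 ≤ ‖x‖ ^ 2 :=
  calc σ₁ * τ * ‖x‖ ^ 2 + σ₂ * τ * ‖f x‖ ^ 2
      ≤ σ₁ * τ * ‖x‖ ^ 2 + σ₂ * τ * (‖f‖ ^ 2 * ‖x‖ ^ 2) := by
        gcongr; exact f.norm_apply_sq_le x
    _ = (σ₁ + σ₂ * ‖f‖ ^ 2) * τ * ‖x‖ ^ 2 := by ring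
    _ ≤ ‖x‖ ^ 2 := mul_le_of_le_one_left (by positivity) hστ

end ContinuousLinearMap

theorem pdhg_stepsize_bound_general {n d k : ℕ}
    (V0 : EuclideanSpace ℝ (Fin n) →L[ℝ] EuclideanSpace ℝ (Fin d))
    (B : EuclideanSpace ℝ (Fin d) →L[ℝ] EuclideanSpace ℝ (Fin k))
    (c1 c2 : ℝ) (hc1 : 0 < c1) (hc2 : 0 < c2) :
    let σ1 : ℝ := c1 / ‖V0‖ ^ 2
    let σ2 : ℝ := c2 / ‖B‖ ^ 2
    let τ1 : ℝ := 1 / (σ1 * ‖V0‖ ^ 2)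
    let τ2 : ℝ := 1 / (σ1 + σ2 * ‖B‖ ^ 2)
    ∀ (x : EuclideanSpace ℝ (Fin n)) (z : EuclideanSpace ℝ (Fin d)),
      σ1 * τ1 * ‖V0 x‖ ^ 2 + σ1 * τ2 * ‖z‖ ^ 2 + σ2 * τ2 * ‖B z‖ ^ 2 ≤
        ‖x‖ ^ 2 + ‖z‖ ^ 2 := by
  intro σ1 σ2 τ1 τ2 x z
  have hσ1 : 0 ≤ σ1 := by positivity
  have hσ2 : 0 ≤ σ2 := by positivity
  have hV0x : σ1 * τ1 * ‖V0 x‖ ^ 2 ≤ ‖x‖ ^ 2 :=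
    V0.mul_mul_norm_apply_sq_le hσ1 (by positivity)
      (by simpa only [τ1, one_div] using mul_inv_le_one) x
  have hBz : σ1 * τ2 * ‖z‖ ^ 2 + σ2 * τ2 * ‖B z‖ ^ 2 ≤ ‖z‖ ^ 2 :=
    B.mul_norm_sq_add_mul_norm_apply_sq_le hσ2 (by positivity)
      (by simpa only [τ2, one_div] using mul_inv_le_one) z
  linarith

/-- Step-size feasibility for the denoising/inpainting PDHG (Appendix B.2): with
`σ1 = c1/‖V0‖²`, `σ2 = c2/‖B‖²`, `τ1 = 1/(σ1‖V0‖²)`, `τ2 = 1/(σ1 + σ2‖B‖²)`, one has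
`‖S^{1/2} K T^{1/2} (x,z)‖² = σ1τ1‖V0 x‖² + σ1τ2‖z‖² + σ2τ2‖B z‖² ≤ ‖x‖² + ‖z‖²`. -/
theorem pdhg_stepsize_bound {n d k : ℕ}
    (V0 : EuclideanSpace ℝ (Fin n) →L[ℝ] EuclideanSpace ℝ (Fin d))
    (B : EuclideanSpace ℝ (Fin d) →L[ℝ] EuclideanSpace ℝ (Fin k))
    (hV0 : V0 ≠ 0) (hB : B ≠ 0)
    (c1 c2 : ℝ) (hc1 : 0 < c1) (hc2 : 0 < c2) :
    let σ1 : ℝ := c1 / ‖V0‖ ^ 2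
    let σ2 : ℝ := c2 / ‖B‖ ^ 2
    let τ1 : ℝ := 1 / (σ1 * ‖V0‖ ^ 2)
    let τ2 : ℝ := 1 / (σ1 + σ2 * ‖B‖ ^ 2)
    ∀ (x : EuclideanSpace ℝ (Fin n)) (z : EuclideanSpace ℝ (Fin d)),
      σ1 * τ1 * ‖V0 x‖ ^ 2 + σ1 * τ2 * ‖z‖ ^ 2 + σ2 * τ2 * ‖B z‖ ^ 2 ≤
        ‖x‖ ^ 2 + ‖z‖ ^ 2 :=
  pdhg_stepsize_bound_general V0 B c1 c2 hc1 hc2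
end
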